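/- Let {A,B} be the unique minimum bisection of G with organized partition value D_C, and let {R,S} be a second minimum bisection (a bisection of minimum cut size among bisections different from {A,B}). Then E(R,S) - E(A,B) ≤ D_C + 1. -/
import Mathlib


open Finset

/-- Number of edges of `G` with one endpoint in `X` and the other in `Y`
(for disjoint `X`, `Y`). -/
def EC {V : Type*} [Fintype V] [DecidableEq V] (G : SimpleGraph V)
    [DecidableRel G.Adj] (X Y : Finset V) : ℕ :=
  ((X ×ˢ Y).filter (fun p => G.Adj p.1 p.2)).card

/-- `{R, S}` is a bisection of the vertex set. -/
def IsBisection {V : Type*} [Fintype V] [DecidableEq V] (R S : Finset V) : Prop :=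
  R ∪ S = Finset.univ ∧ Disjoint R S ∧ R.card = S.card

lemma EC_comm {V : Type*} [Fintype V] [DecidableEq V] (G : SimpleGraph V)
    [DecidableRel G.Adj] (X Y : Finset V) : EC G X Y = EC G Y X := by
  unfold EC
  apply Finset.card_bij' (fun p _ => (p.2, p.1)) (fun p _ => (p.2, p.1)) <;>
    simp +contextual [G.adj_comm, and_comm]

lemma EC_union_left {V : Type*} [Fintype V] [DecidableEq V] (G : SimpleGraph V)
    [DecidableRel G.Adj] {X₁ X₂ : Finset V} (h : Disjoint X₁ X₂) (Y : Finset V) :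
    EC G (X₁ ∪ X₂) Y = EC G X₁ Y + EC G X₂ Y := by
  unfold EC
  rw [Finset.union_product, Finset.filter_union, Finset.card_union_of_disjoint]
  refine Finset.disjoint_filter_filter ?_
  rw [Finset.disjoint_left]
  intro p hp hq
  simp only [Finset.mem_product] at hp hq
  exact Finset.disjoint_left.mp h hp.1 hq.1

lemma EC_union_right {V : Type*} [Fintype V] [DecidableEq V] (G : SimpleGraph V)
    [DecidableRel G.Adj] {Y₁ Y₂ : Finset V} (h : Disjoint Y₁ Y₂) (X : Finset V) :
    EC G X (Y₁ ∪ Y₂) = EC G X Y₁ + EC G X Y₂ := by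
  rw [EC_comm, EC_union_left G h, EC_comm, EC_comm G Y₂]

theorem stmt9 {V : Type*} [Fintype V] [DecidableEq V] (G : SimpleGraph V)
    [DecidableRel G.Adj] (n : ℕ) (A B R S : Finset V) (DC : ℤ)
    (hconn : G.Connected)
    (hcard : Fintype.card V = 4 * n)
    (hbis : IsBisection A B) (hA2n : A.card = 2 * n)
    -- `{A,B}` is the unique minimum bisection
    (huniq : ∀ R' S' : Finset V, IsBisection R' S' →
      ¬((R' = A ∧ S' = B) ∨ (R' = B ∧ S' = A)) → EC G A B < EC G R' S')
    -- `D_C` is the organized-partition value of `{A,B}`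
    (hDC : IsLeast {d : ℤ | ∃ A₁ A₂ B₁ B₂ : Finset V,
      A = A₁ ∪ A₂ ∧ Disjoint A₁ A₂ ∧ B = B₁ ∪ B₂ ∧ Disjoint B₁ B₂ ∧
      A₁.card = n ∧ A₂.card = n ∧ B₁.card = n ∧ B₂.card = n ∧
      d = (EC G A₁ A₂ + EC G B₁ B₂ : ℤ) - EC G A₁ B₁ - EC G A₂ B₂} DC)
    -- `{R,S}` is a second minimum bisection
    (hRS : IsBisection R S) (hne : ¬((R = A ∧ S = B) ∨ (R = B ∧ S = A)))
    (hsec : ∀ R' S' : Finset V, IsBisection R' S' →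
      ¬((R' = A ∧ S' = B) ∨ (R' = B ∧ S' = A)) → EC G R S ≤ EC G R' S') :
    (EC G R S : ℤ) - EC G A B ≤ DC + 1 := by
  obtain ⟨A₁, A₂, B₁, B₂, hAu, hAd, hBu, hBd, hc1, hc2, hc3, hc4, hd⟩ := hDC.1
  obtain ⟨hABu, hABd, hABc⟩ := hbis
  -- n is positive
  have hn : 0 < n := by
    rcases Nat.eq_zero_or_pos n with h0 | h
    · exfalso
      have := hconn.nonempty
      have : 0 < Fintype.card V := Fintype.card_pos
      omega
    · exact h
  obtain ⟨a, ha⟩ : A₁.Nonempty := Finset.card_pos.mp (by omega)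
  obtain ⟨b, hb⟩ : B₁.Nonempty := Finset.card_pos.mp (by omega)
  have haA : a ∈ A := by rw [hAu]; exact Finset.mem_union_left _ ha
  have hbB : b ∈ B := by rw [hBu]; exact Finset.mem_union_left _ hb
  -- disjointness facts
  have hA1B : Disjoint A₁ B := Finset.disjoint_of_subset_left (hAu ▸ Finset.subset_union_left) hABd
  have hA2B : Disjoint A₂ B := Finset.disjoint_of_subset_left (hAu ▸ Finset.subset_union_right) hABd
  have hA1B1 : Disjoint A₁ B₁ := Finset.disjoint_of_subset_right (hBu ▸ Finset.subset_union_left) hA1B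
  have hA1B2 : Disjoint A₁ B₂ := Finset.disjoint_of_subset_right (hBu ▸ Finset.subset_union_right) hA1B
  have hA2B1 : Disjoint A₂ B₁ := Finset.disjoint_of_subset_right (hBu ▸ Finset.subset_union_left) hA2B
  have hA2B2 : Disjoint A₂ B₂ := Finset.disjoint_of_subset_right (hBu ▸ Finset.subset_union_right) hA2B
  set R' := A₁ ∪ B₁ with hR'
  set S' := A₂ ∪ B₂ with hS'
  have hbis' : IsBisection R' S' := by
    refine ⟨?_, ?_, ?_⟩
    · rw [← hABu, hAu, hBu]
      ext x; simp [hR', hS']; tauto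
    · rw [hR', hS']
      simp only [Finset.disjoint_union_left, Finset.disjoint_union_right]
      exact ⟨⟨hAd, hA2B1.symm⟩, ⟨hA1B2, hBd⟩⟩
    · rw [hR', hS', Finset.card_union_of_disjoint hA1B1,
        Finset.card_union_of_disjoint hA2B2]
      omega
  have hne' : ¬((R' = A ∧ S' = B) ∨ (R' = B ∧ S' = A)) := by
    rintro (⟨h1, _⟩ | ⟨h1, _⟩)
    · have : b ∈ A := h1 ▸ Finset.mem_union_right _ hb
      exact Finset.disjoint_left.mp hABd this hbB
    · have : a ∈ B := h1 ▸ Finset.mem_union_left _ ha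
      exact Finset.disjoint_left.mp hABd haA this
  have hle := hsec R' S' hbis' hne'
  -- compute EC G R' S' and EC G A B
  have e1 : EC G R' S' = EC G A₁ A₂ + EC G A₁ B₂ + (EC G B₁ A₂ + EC G B₁ B₂) := by
    rw [hR', hS', EC_union_left G hA1B1, EC_union_right G hA2B2, EC_union_right G hA2B2]
  have e2 : EC G A B = EC G A₁ B₁ + EC G A₁ B₂ + (EC G A₂ B₁ + EC G A₂ B₂) := by
    rw [hAu, hBu, EC_union_left G hAd, EC_union_right G hBd, EC_union_right G hBd]
  have e3 : EC G B₁ A₂ = EC G A₂ B₁ := EC_comm G _ _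
  have key : (EC G R' S' : ℤ) = EC G A B + DC := by
    rw [e1, e2, e3, hd]; push_cast; ring
  have : (EC G R S : ℤ) ≤ EC G R' S' := by exact_mod_cast hle
  omega
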